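/- Let r > 1, λ = √(r² − 1)/r, c₁² + c₂² = 1, and let a, b be nonzero real constants. Define E, F, G : ℝ² → ℝ by E(s,φ) = P(s), F(s,φ) = r·a·P(s), G(s,φ) = r²a²·P(s) + Q(s), where D(s) = c₁/r + cosh(λs + c₃), P(s) = λ²·sinh²(λs + c₃)/D(s)², Q(s) = λ²·(a²(r² − 1) + b²c₂²)/D(s)² (this is the first fundamental form of the circular Dini surface for r > 1). Then at every point (s,φ) with sinh(λs + c₃) ≠ 0, one has EG − F² ≠ 0 and the Gaussian curvature given by the Brioschi formula applied to (E, F, G) equals the constant K₀ = c₂²(a² − b²)/(a²(r² − 1) + b²c₂²). -/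

import Mathlib

/-- Partial derivative with respect to the first coordinate `s`. -/
noncomputable def pds (f : ℝ → ℝ → ℝ) : ℝ → ℝ → ℝ :=
  fun s φ => deriv (fun t => f t φ) s

/-- Partial derivative with respect to the second coordinate `φ`. -/
noncomputable def pdphi (f : ℝ → ℝ → ℝ) : ℝ → ℝ → ℝ :=
  fun s φ => deriv (fun ψ => f s ψ) φ

/-- The Brioschi formula for the Gaussian curvature of the metric
`E ds² + 2F ds dφ + G dφ²`. -/
noncomputable def brioschi (E F G : ℝ → ℝ → ℝ) (s φ : ℝ) : ℝ :=
  (Matrix.det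
     !![-(1/2) * pdphi (pdphi E) s φ + pdphi (pds F) s φ - (1/2) * pds (pds G) s φ,
          (1/2) * pds E s φ, pds F s φ - (1/2) * pdphi E s φ;
        pdphi F s φ - (1/2) * pds G s φ, E s φ, F s φ;
        (1/2) * pdphi G s φ, F s φ, G s φ]
   - Matrix.det
     !![0, (1/2) * pdphi E s φ, (1/2) * pds G s φ;
        (1/2) * pdphi E s φ, E s φ, F s φ;
        (1/2) * pds G s φ, F s φ, G s φ])
  / (E s φ * G s φ - (F s φ) ^ 2) ^ 2

/-!
The metric depends on `s` alone, so the Brioschi formula collapses to an expression in `E, F, G`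
and their first two `s`-derivatives. Write the metric as `P (ds + k dφ)² + Q dφ²` with `k = r a`,
and put `c = c₁ / r`, `D = c + cosh (λ s + c₃)`, `Q = λ² C / D²`. Using only `D' = λ sinh` and
`cosh² = sinh² + 1`, the diagonal part `P ds² + Q dφ²` contributes the curvature `-1` and the
shear contributes `k² (1 - c²) / C`; since `c₁² + c₂² = 1`, their sum is `c₂² (a² - b²) / C`.
-/

open Real

section IndependentOfSecondCoordinate

variable {E F G : ℝ → ℝ → ℝ} {e f g : ℝ → ℝ}

lemma pdphi_eq_zero_of_forall_eq (hE : ∀ s φ, E s φ = e s) (s φ : ℝ) : pdphi E s φ = 0 := by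
  simp [pdphi, hE]

lemma pds_eq_deriv_of_forall_eq (hE : ∀ s φ, E s φ = e s) (s φ : ℝ) : pds E s φ = deriv e s := by
  simp [pds, hE]

theorem brioschi_of_forall_eq (hE : ∀ s φ, E s φ = e s) (hF : ∀ s φ, F s φ = f s)
    (hG : ∀ s φ, G s φ = g s) (s φ : ℝ) :
    brioschi E F G s φ =
      (e s * deriv g s ^ 2 / 4 + deriv e s * deriv g s * g s / 4 - f s * deriv f s * deriv g s / 2
        - deriv (deriv g) s * (e s * g s - f s ^ 2) / 2) / (e s * g s - f s ^ 2) ^ 2 := by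
  have hEφ := pdphi_eq_zero_of_forall_eq hE
  have hEφφ := pdphi_eq_zero_of_forall_eq (e := fun _ => 0) hEφ
  have hFsφ := pdphi_eq_zero_of_forall_eq (pds_eq_deriv_of_forall_eq hF)
  have hGss := pds_eq_deriv_of_forall_eq (pds_eq_deriv_of_forall_eq hG)
  simp only [brioschi, Matrix.det_fin_three, Matrix.of_apply, Matrix.cons_val',
    Matrix.cons_val_zero, Matrix.cons_val_one, Matrix.cons_val, Matrix.cons_val_fin_one,
    hEφ, hEφφ, hFsφ, hGss, pdphi_eq_zero_of_forall_eq hF, pdphi_eq_zero_of_forall_eq hG,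
    pds_eq_deriv_of_forall_eq hE, pds_eq_deriv_of_forall_eq hF, pds_eq_deriv_of_forall_eq hG,
    hE, hF, hG]
  ring

theorem brioschi_shear {P Q P' Q' : ℝ → ℝ} {P'' Q'' k s : ℝ}
    (hP : ∀ t, HasDerivAt P (P' t) t) (hP' : HasDerivAt P' P'' s)
    (hQ : ∀ t, HasDerivAt Q (Q' t) t) (hQ' : HasDerivAt Q' Q'' s)
    (hE : ∀ s φ, E s φ = P s) (hF : ∀ s φ, F s φ = k * P s)
    (hG : ∀ s φ, G s φ = k ^ 2 * P s + Q s) (φ : ℝ) :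
    brioschi E F G s φ =
      (k ^ 2 * (P' s ^ 2 * Q s + P s * P' s * Q' s - 2 * P s * P'' * Q s)
        + (P' s * Q' s * Q s + P s * Q' s ^ 2 - 2 * P s * Q s * Q'')) / (4 * (P s * Q s) ^ 2) := by
  have hG' : ∀ t, HasDerivAt (fun t => k ^ 2 * P t + Q t) (k ^ 2 * P' t + Q' t) t :=
    fun t => ((hP t).const_mul _).add (hQ t)
  have hG'' : HasDerivAt (fun t => k ^ 2 * P' t + Q' t) (k ^ 2 * P'' + Q'') s :=
    (hP'.const_mul _).add hQ'
  rw [brioschi_of_forall_eq hE hF hG, funext fun t => (hG' t).deriv, hG''.deriv, (hP s).deriv,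
    ((hP s).const_mul k).deriv]
  ring

end IndependentOfSecondCoordinate

section DiniProfile

lemma hasDerivAt_sinh_mul_add (lam c₃ t : ℝ) :
    HasDerivAt (fun t => sinh (lam * t + c₃)) (lam * cosh (lam * t + c₃)) t := by
  simpa [mul_comm] using (((hasDerivAt_id t).const_mul lam).add_const c₃).sinh

lemma hasDerivAt_cosh_mul_add (lam c₃ t : ℝ) :
    HasDerivAt (fun t => cosh (lam * t + c₃)) (lam * sinh (lam * t + c₃)) t := by
  simpa [mul_comm] using (((hasDerivAt_id t).const_mul lam).add_const c₃).cosh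

variable {c lam c₃ : ℝ} {D : ℝ → ℝ}

lemma hasDerivAt_dini_denom (hD : ∀ t, D t = c + cosh (lam * t + c₃)) (t : ℝ) :
    HasDerivAt D (lam * sinh (lam * t + c₃)) t := by
  rw [funext hD]
  exact (hasDerivAt_cosh_mul_add lam c₃ t).const_add c

lemma hasDerivAt_dini_P (hD : ∀ t, D t = c + cosh (lam * t + c₃)) {t : ℝ} (hDt : D t ≠ 0) :
    HasDerivAt (fun t => lam ^ 2 * sinh (lam * t + c₃) ^ 2 / D t ^ 2)
      (2 * lam ^ 3 * sinh (lam * t + c₃) * (1 + c * cosh (lam * t + c₃)) / D t ^ 3) t := by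
  refine ((((hasDerivAt_sinh_mul_add lam c₃ t).pow 2).const_mul (lam ^ 2)).div
    ((hasDerivAt_dini_denom hD t).pow 2) (pow_ne_zero 2 hDt)).congr_deriv ?_
  simp only [Pi.pow_apply]
  rw [hD t] at hDt ⊢
  field_simp
  linear_combination
    2 * lam ^ 3 * sinh (lam * t + c₃) * (c + cosh (lam * t + c₃)) * cosh_sq (lam * t + c₃)

lemma hasDerivAt_dini_P' (hD : ∀ t, D t = c + cosh (lam * t + c₃)) {t : ℝ} (hDt : D t ≠ 0) :
    HasDerivAt
      (fun t => 2 * lam ^ 3 * sinh (lam * t + c₃) * (1 + c * cosh (lam * t + c₃)) / D t ^ 3)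
      (2 * lam ^ 4 * ((cosh (lam * t + c₃) * (1 + c * cosh (lam * t + c₃))
          + c * sinh (lam * t + c₃) ^ 2) * D t
        - 3 * sinh (lam * t + c₃) ^ 2 * (1 + c * cosh (lam * t + c₃))) / D t ^ 4) t := by
  refine ((((hasDerivAt_sinh_mul_add lam c₃ t).const_mul (2 * lam ^ 3)).mul
    (((hasDerivAt_cosh_mul_add lam c₃ t).const_mul c).const_add 1)).div
    ((hasDerivAt_dini_denom hD t).pow 3) (pow_ne_zero 3 hDt)).congr_deriv ?_
  simp only [Pi.pow_apply, Pi.mul_apply]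
  field_simp
  ring

lemma hasDerivAt_dini_Q (hD : ∀ t, D t = c + cosh (lam * t + c₃)) (C : ℝ) {t : ℝ} (hDt : D t ≠ 0) :
    HasDerivAt (fun t => lam ^ 2 * C / D t ^ 2)
      (-2 * lam ^ 3 * C * sinh (lam * t + c₃) / D t ^ 3) t := by
  refine ((hasDerivAt_const t (lam ^ 2 * C)).div
    ((hasDerivAt_dini_denom hD t).pow 2) (pow_ne_zero 2 hDt)).congr_deriv ?_
  simp only [Pi.pow_apply]
  field_simp
  ring

lemma hasDerivAt_dini_Q' (hD : ∀ t, D t = c + cosh (lam * t + c₃)) (C : ℝ) {t : ℝ} (hDt : D t ≠ 0) :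
    HasDerivAt (fun t => -2 * lam ^ 3 * C * sinh (lam * t + c₃) / D t ^ 3)
      (-2 * lam ^ 4 * C * (cosh (lam * t + c₃) * D t - 3 * sinh (lam * t + c₃) ^ 2) / D t ^ 4)
      t := by
  refine (((hasDerivAt_sinh_mul_add lam c₃ t).const_mul (-2 * lam ^ 3 * C)).div
    ((hasDerivAt_dini_denom hD t).pow 3) (pow_ne_zero 3 hDt)).congr_deriv ?_
  simp only [Pi.pow_apply]
  field_simp
  ring

lemma dini_denom_pos (hD : ∀ t, D t = c + cosh (lam * t + c₃)) (hc : -1 < c) (t : ℝ) :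
    0 < D t := by
  rw [hD]
  linarith [one_le_cosh (lam * t + c₃)]

theorem brioschi_dini {C k s : ℝ} {P Q : ℝ → ℝ} {E F G : ℝ → ℝ → ℝ}
    (hc : -1 < c) (hlam : lam ≠ 0) (hC : C ≠ 0)
    (hD : ∀ t, D t = c + cosh (lam * t + c₃))
    (hP : ∀ t, P t = lam ^ 2 * sinh (lam * t + c₃) ^ 2 / D t ^ 2)
    (hQ : ∀ t, Q t = lam ^ 2 * C / D t ^ 2)
    (hE : ∀ s φ, E s φ = P s) (hF : ∀ s φ, F s φ = k * P s)
    (hG : ∀ s φ, G s φ = k ^ 2 * P s + Q s) (φ : ℝ) (hs : sinh (lam * s + c₃) ≠ 0) :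
    brioschi E F G s φ = k ^ 2 * (1 - c ^ 2) / C - 1 := by
  have hD0 t : D t ≠ 0 := (dini_denom_pos hD hc t).ne'
  obtain rfl : P = fun t => lam ^ 2 * sinh (lam * t + c₃) ^ 2 / D t ^ 2 := funext hP
  obtain rfl : Q = fun t => lam ^ 2 * C / D t ^ 2 := funext hQ
  rw [brioschi_shear (fun t => hasDerivAt_dini_P hD (hD0 t)) (hasDerivAt_dini_P' hD (hD0 s))
    (fun t => hasDerivAt_dini_Q hD C (hD0 t)) (hasDerivAt_dini_Q' hD C (hD0 s)) hE hF hG]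
  have hDs := hD s
  have hcs := cosh_sq (lam * s + c₃)
  set S := sinh (lam * s + c₃)
  set Ch := cosh (lam * s + c₃)
  have hDs0 := hD0 s
  field_simp
  linear_combination 4 * (C * Ch - k ^ 2 * (Ch * (1 + c * Ch) + c * S ^ 2)) * hDs
    + 4 * (C - k ^ 2 * (1 + c * Ch)) * hcs

end DiniProfile

theorem stmt16_general (r c₁ c₂ c₃ lam a b : ℝ) (hr : 1 < r)
    (hc : c₁ ^ 2 + c₂ ^ 2 = 1)
    (hlam : lam = Real.sqrt (r ^ 2 - 1) / r)
    (ha : a ≠ 0)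
    (D P Q : ℝ → ℝ)
    (hD : ∀ s, D s = c₁ / r + Real.cosh (lam * s + c₃))
    (hP : ∀ s, P s = lam ^ 2 * Real.sinh (lam * s + c₃) ^ 2 / (D s) ^ 2)
    (hQ : ∀ s, Q s = lam ^ 2 * (a ^ 2 * (r ^ 2 - 1) + b ^ 2 * c₂ ^ 2) / (D s) ^ 2)
    (E F G : ℝ → ℝ → ℝ)
    (hE : ∀ s φ : ℝ, E s φ = P s)
    (hF : ∀ s φ : ℝ, F s φ = r * a * P s)
    (hG : ∀ s φ : ℝ, G s φ = r ^ 2 * a ^ 2 * P s + Q s) :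
    ∀ s φ : ℝ, Real.sinh (lam * s + c₃) ≠ 0 →
      E s φ * G s φ - (F s φ) ^ 2 ≠ 0 ∧
      brioschi E F G s φ =
        c₂ ^ 2 * (a ^ 2 - b ^ 2) / (a ^ 2 * (r ^ 2 - 1) + b ^ 2 * c₂ ^ 2) := by
  intro s φ hs
  have hr0 : 0 < r := by linarith
  have hr2 : 0 < r ^ 2 - 1 := by nlinarith
  have hlam0 : lam ≠ 0 := hlam ▸ div_ne_zero (Real.sqrt_ne_zero'.2 hr2) hr0.ne'
  have hC : 0 < a ^ 2 * (r ^ 2 - 1) + b ^ 2 * c₂ ^ 2 := by positivity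
  have hc₁ : -1 < c₁ / r := by
    rw [lt_div_iff₀ hr0]
    nlinarith
  have hDs := (dini_denom_pos hD hc₁ s).ne'
  have hG' s φ : G s φ = (r * a) ^ 2 * P s + Q s := by rw [hG]; ring
  have hdet : E s φ * G s φ - F s φ ^ 2 = P s * Q s := by rw [hE, hF, hG]; ring
  refine ⟨?_, ?_⟩
  · rw [hdet, hP, hQ]
    simp [hlam0, hs, hDs, hC.ne']
  · rw [brioschi_dini hc₁ hlam0 hC.ne' hD hP hQ hE hF hG' φ hs]
    field_simp
    linear_combination -a ^ 2 * hc

theorem stmt16 (r c₁ c₂ c₃ lam a b : ℝ) (hr : 1 < r)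
    (hc : c₁ ^ 2 + c₂ ^ 2 = 1)
    (hlam : lam = Real.sqrt (r ^ 2 - 1) / r)
    (ha : a ≠ 0) (hb : b ≠ 0)
    (D P Q : ℝ → ℝ)
    (hD : ∀ s, D s = c₁ / r + Real.cosh (lam * s + c₃))
    (hP : ∀ s, P s = lam ^ 2 * Real.sinh (lam * s + c₃) ^ 2 / (D s) ^ 2)
    (hQ : ∀ s, Q s = lam ^ 2 * (a ^ 2 * (r ^ 2 - 1) + b ^ 2 * c₂ ^ 2) / (D s) ^ 2)
    (E F G : ℝ → ℝ → ℝ)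
    (hE : ∀ s φ : ℝ, E s φ = P s)
    (hF : ∀ s φ : ℝ, F s φ = r * a * P s)
    (hG : ∀ s φ : ℝ, G s φ = r ^ 2 * a ^ 2 * P s + Q s) :
    ∀ s φ : ℝ, Real.sinh (lam * s + c₃) ≠ 0 →
      E s φ * G s φ - (F s φ) ^ 2 ≠ 0 ∧
      brioschi E F G s φ =
        c₂ ^ 2 * (a ^ 2 - b ^ 2) / (a ^ 2 * (r ^ 2 - 1) + b ^ 2 * c₂ ^ 2) :=
  stmt16_general r c₁ c₂ c₃ lam a b hr hc hlam ha D P Q hD hP hQ E F G hE hF hG
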